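/- The interval-freeness hypothesis on s in the equality-elimination theorem cannot be dropped: for the closed aggregate atom E = count{a : p} = (0̄..1̄)×2̄ (where a is a symbolic constant and p is a ground atom), the translation τE is the formula p → ⊥, while τE_≤ and τE_≥ (obtained by replacing = with ≤ and ≥ respectively) are both the empty conjunction ⊤; and p → ⊥ is not strongly equivalent to ⊤ ∧ ⊤. -/
import Mathlib


namespace AG

/-! Infinitary propositional formulas (Truszczyński), satisfaction, reducts,
stable models, and strong equivalence. Conjunctions and disjunctions over
arbitrary sets of formulas are represented by (Type-valued) indexed families. -/

inductive Formula (σ : Type) : Type 1 where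
  | atom : σ → Formula σ
  | conj : (ι : Type) → (ι → Formula σ) → Formula σ
  | disj : (ι : Type) → (ι → Formula σ) → Formula σ
  | impl : Formula σ → Formula σ → Formula σ

namespace Formula

def bot {σ : Type} : Formula σ := disj Empty (fun e => e.elim)

def top {σ : Type} : Formula σ := conj Empty (fun e => e.elim)

def neg {σ : Type} (F : Formula σ) : Formula σ := impl F bot

def and {σ : Type} (F G : Formula σ) : Formula σ :=
  conj Bool (fun b => if b then F else G)

def or {σ : Type} (F G : Formula σ) : Formula σ :=
  disj Bool (fun b => if b then F else G)

end Formula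

/-- Satisfaction of an infinitary formula by an interpretation `I ⊆ σ`. -/
def Sat {σ : Type} (I : Set σ) : Formula σ → Prop
  | .atom p => p ∈ I
  | .conj _ f => ∀ i, Sat I (f i)
  | .disj _ f => ∃ i, Sat I (f i)
  | .impl F G => Sat I F → Sat I G

open Classical in
/-- The reduct `F^I` of a formula `F` with respect to an interpretation `I`. -/
noncomputable def reduct {σ : Type} (I : Set σ) : Formula σ → Formula σ
  | .atom p => if p ∈ I then .atom p else .bot
  | .conj ι f => .conj ι (fun i => reduct I (f i))
  | .disj ι f => .disj ι (fun i => reduct I (f i))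
  | .impl F G => if Sat I (.impl F G) then .impl (reduct I F) (reduct I G) else .bot

/-- `I` is a stable model of a set `H` of infinitary formulas: `I` is minimal with
respect to set inclusion among the interpretations satisfying the reducts (w.r.t. `I`)
of all formulas in `H`. -/
def IsStableModel {σ : Type} (H : Set (Formula σ)) (I : Set σ) : Prop :=
  (∀ F ∈ H, Sat I (reduct I F)) ∧
  ∀ J : Set σ, J ⊆ I → (∀ F ∈ H, Sat J (reduct I F)) → J = I

/-- Strong equivalence of infinitary formulas: `H ∪ {F}` and `H ∪ {G}` have the same
stable models for every set `H` of formulas. -/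
def StronglyEquivalent {σ : Type} (F G : Formula σ) : Prop :=
  ∀ (H : Set (Formula σ)) (I : Set σ),
    IsStableModel (insert F H) I ↔ IsStableModel (insert G H) I

/-! Terms of Abstract Gringo: numerals, the symbols `inf`/`sup`, symbolic
constants, variables, function terms, arithmetic/interval terms, and tuples. -/

inductive AGOp : Type where
  | add | sub | mul | div | interval

inductive AGTerm : Type where
  | num : ℤ → AGTerm
  | inf : AGTerm
  | sup : AGTerm
  | sym : ℕ → AGTerm
  | var : ℕ → AGTerm
  | fn : ℕ → List AGTerm → AGTerm
  | bin : AGOp → AGTerm → AGTerm → AGTerm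
  | tuple : List AGTerm → AGTerm

mutual

/-- `tval t` is the set `[t]` of values of a ground term `t`. -/
def tval : AGTerm → Set AGTerm
  | AGTerm.num n => {u | u = AGTerm.num n}
  | AGTerm.inf => {u | u = AGTerm.inf}
  | AGTerm.sup => {u | u = AGTerm.sup}
  | AGTerm.sym c => {u | u = AGTerm.sym c}
  | AGTerm.var _ => ∅
  | AGTerm.fn f ts => {u | ∃ rs ∈ tvalList ts, u = AGTerm.fn f rs}
  | AGTerm.bin AGOp.add t₁ t₂ =>
      {u | ∃ n₁ n₂ : ℤ, AGTerm.num n₁ ∈ tval t₁ ∧ AGTerm.num n₂ ∈ tval t₂ ∧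
        u = AGTerm.num (n₁ + n₂)}
  | AGTerm.bin AGOp.sub t₁ t₂ =>
      {u | ∃ n₁ n₂ : ℤ, AGTerm.num n₁ ∈ tval t₁ ∧ AGTerm.num n₂ ∈ tval t₂ ∧
        u = AGTerm.num (n₁ - n₂)}
  | AGTerm.bin AGOp.mul t₁ t₂ =>
      {u | ∃ n₁ n₂ : ℤ, AGTerm.num n₁ ∈ tval t₁ ∧ AGTerm.num n₂ ∈ tval t₂ ∧
        u = AGTerm.num (n₁ * n₂)}
  | AGTerm.bin AGOp.div t₁ t₂ =>
      {u | ∃ n₁ n₂ : ℤ, AGTerm.num n₁ ∈ tval t₁ ∧ AGTerm.num n₂ ∈ tval t₂ ∧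
        n₂ ≠ 0 ∧ u = AGTerm.num (Int.fdiv n₁ n₂)}
  | AGTerm.bin AGOp.interval t₁ t₂ =>
      {u | ∃ m n₁ n₂ : ℤ, AGTerm.num n₁ ∈ tval t₁ ∧ AGTerm.num n₂ ∈ tval t₂ ∧
        n₁ ≤ m ∧ m ≤ n₂ ∧ u = AGTerm.num m}
  | AGTerm.tuple ts => {u | ∃ rs ∈ tvalList ts, u = AGTerm.tuple rs}

/-- `tvalList ts` is the set `[t]` of values of a tuple `t` of ground terms
(componentwise evaluation). -/
def tvalList : List AGTerm → Set (List AGTerm)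
  | [] => {l | l = []}
  | t :: ts => {l | ∃ r ∈ tval t, ∃ rs ∈ tvalList ts, l = r :: rs}

end

/-- A term is ground if it contains no variables. -/
inductive Ground : AGTerm → Prop where
  | num (n : ℤ) : Ground (AGTerm.num n)
  | inf : Ground AGTerm.inf
  | sup : Ground AGTerm.sup
  | sym (c : ℕ) : Ground (AGTerm.sym c)
  | fn (f : ℕ) (ts : List AGTerm) : (∀ t ∈ ts, Ground t) → Ground (AGTerm.fn f ts)
  | bin (o : AGOp) (t₁ t₂ : AGTerm) :
      Ground t₁ → Ground t₂ → Ground (AGTerm.bin o t₁ t₂)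
  | tuple (ts : List AGTerm) : (∀ t ∈ ts, Ground t) → Ground (AGTerm.tuple ts)

/-- A term is precomputed if it contains neither variables nor the symbols
`+ - × / ..`. -/
inductive Precomputed : AGTerm → Prop where
  | num (n : ℤ) : Precomputed (AGTerm.num n)
  | inf : Precomputed AGTerm.inf
  | sup : Precomputed AGTerm.sup
  | sym (c : ℕ) : Precomputed (AGTerm.sym c)
  | fn (f : ℕ) (ts : List AGTerm) :
      (∀ t ∈ ts, Precomputed t) → Precomputed (AGTerm.fn f ts)
  | tuple (ts : List AGTerm) :
      (∀ t ∈ ts, Precomputed t) → Precomputed (AGTerm.tuple ts)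

/-- A term is interval-free if it does not contain the symbol `..`. -/
inductive IntervalFree : AGTerm → Prop where
  | num (n : ℤ) : IntervalFree (AGTerm.num n)
  | inf : IntervalFree AGTerm.inf
  | sup : IntervalFree AGTerm.sup
  | sym (c : ℕ) : IntervalFree (AGTerm.sym c)
  | var (v : ℕ) : IntervalFree (AGTerm.var v)
  | fn (f : ℕ) (ts : List AGTerm) :
      (∀ t ∈ ts, IntervalFree t) → IntervalFree (AGTerm.fn f ts)
  | bin (o : AGOp) (t₁ t₂ : AGTerm) : o ≠ AGOp.interval →
      IntervalFree t₁ → IntervalFree t₂ → IntervalFree (AGTerm.bin o t₁ t₂)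
  | tuple (ts : List AGTerm) :
      (∀ t ∈ ts, IntervalFree t) → IntervalFree (AGTerm.tuple ts)

/-- The variable `v` occurs in the term. -/
inductive VarOccurs (v : ℕ) : AGTerm → Prop where
  | var : VarOccurs v (AGTerm.var v)
  | fn {f : ℕ} {ts : List AGTerm} {t : AGTerm} :
      t ∈ ts → VarOccurs v t → VarOccurs v (AGTerm.fn f ts)
  | binLeft {o : AGOp} {t₁ t₂ : AGTerm} :
      VarOccurs v t₁ → VarOccurs v (AGTerm.bin o t₁ t₂)
  | binRight {o : AGOp} {t₁ t₂ : AGTerm} :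
      VarOccurs v t₂ → VarOccurs v (AGTerm.bin o t₁ t₂)
  | tuple {ts : List AGTerm} {t : AGTerm} :
      t ∈ ts → VarOccurs v t → VarOccurs v (AGTerm.tuple ts)

/-- The substitution mapping the variables in the list `xs` to the corresponding
members of the list `rs` (and every other variable to itself). -/
def assign (xs : List ℕ) (rs : List AGTerm) (v : ℕ) : AGTerm :=
  ((xs.zip rs).lookup v).getD (AGTerm.var v)

/-- Applying a substitution to a term. -/
def subst (ρ : ℕ → AGTerm) : AGTerm → AGTerm
  | AGTerm.num n => AGTerm.num n
  | AGTerm.inf => AGTerm.inf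
  | AGTerm.sup => AGTerm.sup
  | AGTerm.sym c => AGTerm.sym c
  | AGTerm.var v => ρ v
  | AGTerm.fn f ts => AGTerm.fn f (ts.attach.map (fun x => subst ρ x.1))
  | AGTerm.bin o t₁ t₂ => AGTerm.bin o (subst ρ t₁) (subst ρ t₂)
  | AGTerm.tuple ts => AGTerm.tuple (ts.attach.map (fun x => subst ρ x.1))
termination_by t => sizeOf t
decreasing_by
  all_goals simp_wf
  all_goals try (cases x; simp_all)
  all_goals first
    | (rename_i hmem; have := List.sizeOf_lt_of_mem hmem; omega)
    | omega

/-- The assumed total order on precomputed terms: `inf` is its least element,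
`sup` is its greatest element, and numerals are ordered according to their
integers. -/
structure AGOrder : Type where
  le : AGTerm → AGTerm → Prop
  refl : ∀ t : AGTerm, Precomputed t → le t t
  trans : ∀ a b c : AGTerm, Precomputed a → Precomputed b → Precomputed c →
    le a b → le b c → le a c
  antisymm : ∀ a b : AGTerm, Precomputed a → Precomputed b →
    le a b → le b a → a = b
  total : ∀ a b : AGTerm, Precomputed a → Precomputed b → le a b ∨ le b a
  inf_le : ∀ t : AGTerm, Precomputed t → le AGTerm.inf t
  le_sup : ∀ t : AGTerm, Precomputed t → le t AGTerm.sup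
  num_le_num : ∀ m n : ℤ, le (AGTerm.num m) (AGTerm.num n) ↔ m ≤ n

/-- The strict order associated with the total order on precomputed terms. -/
def AGOrder.lt (o : AGOrder) (a b : AGTerm) : Prop := o.le a b ∧ a ≠ b

/-- Tuples of precomputed terms of length `k`. -/
def PTuple (k : ℕ) : Type :=
  {r : List AGTerm // r.length = k ∧ ∀ u ∈ r, Precomputed u}

/-- The data of the aggregate elements `t₁ : L₁ ; … ; tₙ : Lₙ` of an aggregate
atom: for each `i`, the list `xᵢ` of variables of `tᵢ : Lᵢ`, the tuple `tᵢ` of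
terms, and the function sending a tuple `r` of precomputed terms (to be
substituted for `xᵢ`) to the infinitary formula `τ∨((Lᵢ)ʳ_{xᵢ})`. -/
structure AggAtom (σ : Type) where
  n : ℕ
  x : Fin n → List ℕ
  t : Fin n → List AGTerm
  L : (i : Fin n) → List AGTerm → Formula σ

/-- The index set `A = {(i, r) : 1 ≤ i ≤ n, r ∈ Aᵢ}`, where `Aᵢ` is the set of
tuples of precomputed terms of the same length as `xᵢ`. -/
def Idx {σ : Type} (E : AggAtom σ) : Type :=
  Σ i : Fin E.n, PTuple (E.x i).length

/-- `[(tᵢ)ʳ_{xᵢ}]` for `a = (i, r) ∈ A`. -/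
def elemVal {σ : Type} (E : AggAtom σ) (a : Idx E) : Set (List AGTerm) :=
  tvalList ((E.t a.1).map (subst (assign (E.x a.1) a.2.1)))

/-- `[Δ]`: the union of the sets `[(tᵢ)ʳ_{xᵢ}]` over `(i, r) ∈ Δ`. -/
def deltaVal {σ : Type} (E : AggAtom σ) (Δ : Set (Idx E)) : Set (List AGTerm) :=
  ⋃ a ∈ Δ, elemVal E a

/-- `τ∨((Lᵢ)ʳ_{xᵢ})` for `a = (i, r) ∈ A`. -/
def fml {σ : Type} (E : AggAtom σ) (a : Idx E) : Formula σ :=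
  E.L a.1 a.2.1

/-- `Δ` justifies the aggregate atom `α{t₁ : L₁ ; … ; tₙ : Lₙ} ≺ s`: the
relation `cmp` (the one denoted by `≺`) holds between `α̂[Δ]` and at least one
precomputed term `u ∈ [s]`. -/
def Justifies {σ : Type} (E : AggAtom σ) (alphaHat : Set (List AGTerm) → AGTerm)
    (cmp : AGTerm → AGTerm → Prop) (s : AGTerm) (Δ : Set (Idx E)) : Prop :=
  ∃ u ∈ tval s, cmp (alphaHat (deltaVal E Δ)) u

/-- `τE`: the conjunction, over all `Δ ⊆ A` that do not justify `E`, of the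
implications `⋀_{(i,r)∈Δ} τ∨((Lᵢ)ʳ_{xᵢ}) → ⋁_{(i,r)∈A∖Δ} τ∨((Lᵢ)ʳ_{xᵢ})`. -/
def tauAgg {σ : Type} (E : AggAtom σ) (justifies : Set (Idx E) → Prop) :
    Formula σ :=
  Formula.conj {Δ : Set (Idx E) // ¬ justifies Δ} (fun Δ =>
    Formula.impl
      (Formula.conj {a : Idx E // a ∈ Δ.1} (fun a => fml E a.1))
      (Formula.disj {a : Idx E // a ∉ Δ.1} (fun a => fml E a.1)))

open Classical in
/-- `ĉount(T)`: the numeral corresponding to the cardinality of `T` if `T` is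
finite, and `sup` otherwise. -/
noncomputable def countHat (T : Set (List AGTerm)) : AGTerm :=
  if T.Finite then AGTerm.num T.ncard else AGTerm.sup

/-- The aggregate elements of the atom `count{a : p}`: a single element whose
tuple of terms is the one-term tuple `a` (a symbolic constant, no variables)
and whose condition translates to the propositional atom `p`. -/
def cexAgg15 (σ : Type) (p : σ) : AggAtom σ :=
  ⟨1, fun _ => ([] : List ℕ), fun _ => [AGTerm.sym 0], fun _ _ => Formula.atom p⟩

/-- The term `(0̄..1̄) × 2̄` (whose set of values is `{0̄, 2̄}`). -/
def cexTerm15 : AGTerm :=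
  AGTerm.bin AGOp.mul (AGTerm.bin AGOp.interval (AGTerm.num 0) (AGTerm.num 1))
    (AGTerm.num 2)

section Aux

variable {σ : Type}

lemma se_of_reduct_iff {F G : Formula σ}
    (h : ∀ I J : Set σ, Sat J (reduct I F) ↔ Sat J (reduct I G)) :
    StronglyEquivalent F G := by
  intro H I
  constructor
  · rintro ⟨h1, h2⟩
    refine ⟨?_, ?_⟩
    · rintro F' (rfl | hF')
      · exact (h I I).mp (h1 _ (Set.mem_insert _ _))
      · exact h1 _ (Set.mem_insert_of_mem _ hF')
    · intro J hJ hsat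
      refine h2 J hJ ?_
      rintro F' (rfl | hF')
      · exact (h I J).mpr (hsat _ (Set.mem_insert _ _))
      · exact hsat _ (Set.mem_insert_of_mem _ hF')
  · rintro ⟨h1, h2⟩
    refine ⟨?_, ?_⟩
    · rintro F' (rfl | hF')
      · exact (h I I).mpr (h1 _ (Set.mem_insert _ _))
      · exact h1 _ (Set.mem_insert_of_mem _ hF')
    · intro J hJ hsat
      refine h2 J hJ ?_
      rintro F' (rfl | hF')
      · exact (h I J).mp (hsat _ (Set.mem_insert _ _))
      · exact hsat _ (Set.mem_insert_of_mem _ hF')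

/-- The unique index of the aggregate `count{a : p}`. -/
def a0 (σ : Type) (p : σ) : Idx (cexAgg15 σ p) :=
  ⟨⟨0, Nat.one_pos⟩, ⟨[], rfl, by intro u hu; cases hu⟩⟩

lemma idx_subsingleton (p : σ) (a b : Idx (cexAgg15 σ p)) : a = b := by
  obtain ⟨i, r⟩ := a
  obtain ⟨j, s⟩ := b
  have hn : (cexAgg15 σ p).n = 1 := rfl
  have hi := i.isLt
  have hj := j.isLt
  have hij : i = j := Fin.ext (by omega)
  subst hij
  congr 1
  apply Subtype.ext
  have hr : r.1.length = 0 := r.2.1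
  have hs : s.1.length = 0 := s.2.1
  rw [List.length_eq_zero_iff.mp hr, List.length_eq_zero_iff.mp hs]

lemma idx_eq (p : σ) (a : Idx (cexAgg15 σ p)) : a = a0 σ p :=
  idx_subsingleton p a _

lemma elemVal_eq (p : σ) (a : Idx (cexAgg15 σ p)) :
    elemVal (cexAgg15 σ p) a = {[AGTerm.sym 0]} := by
  ext l
  simp only [elemVal, cexAgg15, List.map, subst, tvalList, tval,
    Set.mem_setOf_eq, Set.mem_singleton_iff]
  constructor
  · rintro ⟨r, rfl, rs, rfl, rfl⟩; rfl
  · rintro rfl; exact ⟨_, rfl, [], rfl, rfl⟩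

lemma deltaVal_empty (p : σ) : deltaVal (cexAgg15 σ p) ∅ = ∅ := by
  simp [deltaVal]

lemma deltaVal_of_mem (p : σ) {Δ : Set (Idx (cexAgg15 σ p))} (h : a0 σ p ∈ Δ) :
    deltaVal (cexAgg15 σ p) Δ = {[AGTerm.sym 0]} := by
  apply Set.eq_singleton_iff_unique_mem.mpr
  constructor
  · exact Set.mem_biUnion h (by rw [elemVal_eq]; rfl)
  · intro l hl
    obtain ⟨a, _, hal⟩ := Set.mem_iUnion₂.mp hl
    rw [elemVal_eq] at hal
    exact hal

lemma countHat_empty : countHat (∅ : Set (List AGTerm)) = AGTerm.num 0 := by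
  simp [countHat]

lemma countHat_singleton (l : List AGTerm) :
    countHat ({l} : Set (List AGTerm)) = AGTerm.num 1 := by
  simp [countHat]

lemma mem_tval_cexTerm15 (u : AGTerm) :
    u ∈ tval cexTerm15 ↔ u = AGTerm.num 0 ∨ u = AGTerm.num 2 := by
  simp only [cexTerm15, tval, Set.mem_setOf_eq]
  constructor
  · rintro ⟨n₁, n₂, ⟨m, a, b, ha, hb, h1, h2, hm⟩, hn₂, rfl⟩
    cases ha; cases hb
    cases hm
    cases hn₂
    interval_cases n₁
    · left; rfl
    · right; rfl
  · rintro (rfl | rfl)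
    · exact ⟨0, 2, ⟨0, 0, 1, rfl, rfl, le_refl _, by norm_num, rfl⟩, rfl, rfl⟩
    · exact ⟨1, 2, ⟨1, 0, 1, rfl, rfl, by norm_num, le_refl _, rfl⟩, rfl, rfl⟩

end Aux


section Aux2

variable {σ : Type}

lemma not_sat_bot (J : Set σ) : ¬ Sat J Formula.bot := by
  rintro ⟨e, -⟩; exact e.elim

lemma sat_top (J : Set σ) : Sat J Formula.top := by
  intro e; exact e.elim

lemma sat_reduct_conj (I J : Set σ) (ι : Type) (f : ι → Formula σ) :
    Sat J (reduct I (Formula.conj ι f)) ↔ ∀ i, Sat J (reduct I (f i)) := Iff.rfl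

lemma sat_reduct_impl (I J : Set σ) (F G : Formula σ) :
    Sat J (reduct I (Formula.impl F G)) ↔
      Sat I (Formula.impl F G) ∧ (Sat J (reduct I F) → Sat J (reduct I G)) := by
  simp only [reduct]
  split_ifs with h
  · exact ⟨fun h2 => ⟨h, h2⟩, fun h2 => h2.2⟩
  · exact ⟨fun hb => absurd hb (not_sat_bot J), fun h2 => absurd h2.1 h⟩

lemma reduct_atom_neg (I : Set σ) {q : σ} (h : q ∉ I) :
    reduct I (Formula.atom q) = Formula.bot := by
  simp only [reduct, if_neg h]

lemma fml_eq (p : σ) (a : Idx (cexAgg15 σ p)) :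
    fml (cexAgg15 σ p) a = Formula.atom p := rfl

lemma just_empty_eq (p : σ) :
    Justifies (cexAgg15 σ p) countHat (fun a b => a = b) cexTerm15 ∅ := by
  refine ⟨AGTerm.num 0, (mem_tval_cexTerm15 _).mpr (Or.inl rfl), ?_⟩
  rw [deltaVal_empty, countHat_empty]

lemma notjust_univ_eq (p : σ) :
    ¬ Justifies (cexAgg15 σ p) countHat (fun a b => a = b) cexTerm15 Set.univ := by
  rintro ⟨u, hu, hc⟩
  rw [deltaVal_of_mem p (Set.mem_univ _), countHat_singleton] at hc
  rcases (mem_tval_cexTerm15 u).mp hu with rfl | rfl <;> simp_all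

lemma mem_of_notjust_eq (p : σ) {Δ : Set (Idx (cexAgg15 σ p))}
    (h : ¬ Justifies (cexAgg15 σ p) countHat (fun a b => a = b) cexTerm15 Δ) :
    a0 σ p ∈ Δ := by
  by_contra hmem
  apply h
  have hΔ : Δ = ∅ := by
    ext a
    simp only [Set.mem_empty_iff_false, iff_false]
    intro ha
    rw [idx_eq p a] at ha
    exact hmem ha
  rw [hΔ]
  exact just_empty_eq p

lemma all_just_le (ord : AGOrder) (p : σ) (Δ : Set (Idx (cexAgg15 σ p))) :
    Justifies (cexAgg15 σ p) countHat ord.le cexTerm15 Δ := by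
  by_cases h : a0 σ p ∈ Δ
  · refine ⟨AGTerm.num 2, (mem_tval_cexTerm15 _).mpr (Or.inr rfl), ?_⟩
    rw [deltaVal_of_mem p h, countHat_singleton]
    exact (ord.num_le_num 1 2).mpr (by norm_num)
  · have hΔ : Δ = ∅ := by
      ext a
      simp only [Set.mem_empty_iff_false, iff_false]
      intro ha
      rw [idx_eq p a] at ha
      exact h ha
    refine ⟨AGTerm.num 0, (mem_tval_cexTerm15 _).mpr (Or.inl rfl), ?_⟩
    rw [hΔ, deltaVal_empty, countHat_empty]
    exact (ord.num_le_num 0 0).mpr le_rfl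

lemma all_just_ge (ord : AGOrder) (p : σ) (Δ : Set (Idx (cexAgg15 σ p))) :
    Justifies (cexAgg15 σ p) countHat (fun a b => ord.le b a) cexTerm15 Δ := by
  by_cases h : a0 σ p ∈ Δ
  · refine ⟨AGTerm.num 0, (mem_tval_cexTerm15 _).mpr (Or.inl rfl), ?_⟩
    rw [deltaVal_of_mem p h, countHat_singleton]
    exact (ord.num_le_num 0 1).mpr (by norm_num)
  · have hΔ : Δ = ∅ := by
      ext a
      simp only [Set.mem_empty_iff_false, iff_false]
      intro ha
      rw [idx_eq p a] at ha
      exact h ha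
    refine ⟨AGTerm.num 0, (mem_tval_cexTerm15 _).mpr (Or.inl rfl), ?_⟩
    rw [hΔ, deltaVal_empty, countHat_empty]
    exact (ord.num_le_num 0 0).mpr le_rfl

lemma se_top_of_all_just {σ : Type} (p : σ)
    (just : Set (Idx (cexAgg15 σ p)) → Prop) (hall : ∀ Δ, just Δ) :
    StronglyEquivalent (tauAgg (cexAgg15 σ p) just) Formula.top := by
  apply se_of_reduct_iff
  intro I J
  constructor
  · intro _ e; exact e.elim
  · intro _
    rw [tauAgg, sat_reduct_conj]
    intro Δ
    exact absurd (hall Δ.1) Δ.2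

end Aux2

/-- **Interval-freeness of `s` cannot be dropped in the equality-elimination
theorem.**  For the closed aggregate atom `E = count{a : p} = (0̄..1̄)×2̄`, the
translation `τE` is (strongly equivalent to) the formula `p → ⊥`, while `τE_≤`
and `τE_≥` are both (strongly equivalent to) the empty conjunction `⊤`; and
`p → ⊥` is not strongly equivalent to `⊤ ∧ ⊤`. -/
theorem interval_needed_for_equality_elimination {σ : Type} (ord : AGOrder)
    (p : σ) :
    StronglyEquivalent
      (tauAgg (cexAgg15 σ p)
        (Justifies (cexAgg15 σ p) countHat (fun a b => a = b) cexTerm15))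
      (Formula.impl (Formula.atom p) Formula.bot) ∧
    StronglyEquivalent
      (tauAgg (cexAgg15 σ p)
        (Justifies (cexAgg15 σ p) countHat ord.le cexTerm15))
      Formula.top ∧
    StronglyEquivalent
      (tauAgg (cexAgg15 σ p)
        (Justifies (cexAgg15 σ p) countHat (fun a b => ord.le b a) cexTerm15))
      Formula.top ∧
    ¬ StronglyEquivalent (Formula.impl (Formula.atom p) Formula.bot)
        (Formula.and Formula.top Formula.top) := by
  refine ⟨?_, se_top_of_all_just p _ (all_just_le ord p),
    se_top_of_all_just p _ (all_just_ge ord p), ?_⟩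
  · -- the equality case: τE is strongly equivalent to p → ⊥
    apply se_of_reduct_iff
    intro I J
    have hRHS : Sat J (reduct I (Formula.impl (Formula.atom p) Formula.bot)) ↔ p ∉ I := by
      rw [sat_reduct_impl]
      constructor
      · rintro ⟨h1, -⟩ hp
        exact not_sat_bot I (h1 hp)
      · intro hp
        refine ⟨fun hmem => absurd hmem hp, fun hsat => ?_⟩
        rw [reduct_atom_neg I hp] at hsat
        exact absurd hsat (not_sat_bot J)
    rw [hRHS, tauAgg, sat_reduct_conj]
    constructor
    · intro hall hp
      have := hall ⟨Set.univ, notjust_univ_eq p⟩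
      rw [sat_reduct_impl] at this
      have h1 := this.1
      obtain ⟨a, -⟩ := h1 (fun _ => hp)
      exact a.2 (Set.mem_univ a.1)
    · intro hp Δ
      rw [sat_reduct_impl]
      constructor
      · intro hA
        exact absurd (hA ⟨a0 σ p, mem_of_notjust_eq p Δ.2⟩) hp
      · intro hA
        have := hA ⟨a0 σ p, mem_of_notjust_eq p Δ.2⟩
        simp only [fml_eq, reduct_atom_neg I hp] at this
        exact absurd this (not_sat_bot J)
  · -- p → ⊥ is not strongly equivalent to ⊤ ∧ ⊤
    intro hSE
    have hstable : IsStableModel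
        (insert (Formula.and Formula.top Formula.top) {Formula.atom p}) ({p} : Set σ) := by
      constructor
      · rintro F (rfl | hF)
        · intro b
          cases b <;> · intro e; exact e.elim
        · rw [Set.mem_singleton_iff] at hF
          subst hF
          simp only [reduct, if_pos (Set.mem_singleton p)]
          exact Set.mem_singleton p
      · intro Jset hJ hsat
        have hp := hsat (Formula.atom p) (Set.mem_insert_of_mem _ rfl)
        simp only [reduct, if_pos (Set.mem_singleton p)] at hp
        apply Set.Subset.antisymm hJ
        intro x hx
        rw [Set.mem_singleton_iff] at hx
        subst hx
        exact hp
    have hstable' := (hSE {Formula.atom p} {p}).mpr hstable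
    have h1 := hstable'.1 _ (Set.mem_insert _ _)
    obtain ⟨h2, -⟩ := (sat_reduct_impl _ _ _ _).mp h1
    exact not_sat_bot _ (h2 (Set.mem_singleton p))


end AG
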